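/- arXiv:1005.4344 — 2 statements merged into one kernel-verified Lean document; each statement's English description precedes it below -/
import Mathlib

section
/- For a signal f : {1,...,N} → [0,∞) with E[f] := max_i f(i)·Z(i) built from independent standard α-Fréchet Z(i), fix i₀ and let ξ := (max_{1≤i≤N} f(i)Z(i))/Z(i₀). Then P(ξ = f(i₀)) = f(i₀)^α / ∑_{i=1}^N f(i)^α, assuming f is not identically zero. -/
/-!
Almost surely every `Z i` is positive, so the event is `{Y ≤ X}` with `X = f i₀ Z i₀` and
`Y = max_{i ≠ i₀} f i Z i`. The Fréchet form `P(· ≤ x) = exp (-c x^{-α})` is preserved by scaling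
by `t` (`c ↦ t^α c`) and by maxima of independent variables (the `c`'s add), so `X` and `Y` are
independent with `a = f i₀^α` and `b = ∑_{i ≠ i₀} f i^α`. Finally `X` has the law of `E^{-1/α}` with
`E ~ Exp(a)`, hence `P(Y ≤ X) = 𝔼[exp (-b E)] = a / (a + b)`; when `f i₀ = 0` instead, some
`f j Z j > 0 = X` almost surely.
-/

open MeasureTheory ProbabilityTheory Real Set

lemma Real.iSup_eq_apply_iff_iSup_erase_le {ι : Type*} [Fintype ι] [DecidableEq ι] {g : ι → ℝ}
    {i₀ : ι} (h : 0 ≤ g i₀) :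
    ⨆ i, g i = g i₀ ↔ ⨆ i : Finset.univ.erase i₀, g i ≤ g i₀ := by
  have hbdd : BddAbove (range g) := (finite_range g).bddAbove
  refine ⟨fun heq => Real.iSup_le (fun i => heq ▸ le_ciSup hbdd (i : ι)) h, fun hle => ?_⟩
  refine le_antisymm (Real.iSup_le (fun i => ?_) h) (le_ciSup hbdd i₀)
  by_cases hi : i = i₀
  · rw [hi]
  · exact (le_ciSup (finite_range _).bddAbove
      (⟨i, Finset.mem_erase.2 ⟨hi, Finset.mem_univ _⟩⟩ : Finset.univ.erase i₀)).trans hle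

namespace ProbabilityTheory

lemma expMeasure_Iic {r : ℝ} (hr : 0 < r) (x : ℝ) :
    expMeasure r (Iic x) = ENNReal.ofReal (if 0 ≤ x then 1 - exp (-(r * x)) else 0) := by
  have := isProbabilityMeasure_expMeasure hr
  rw [← ofReal_cdf, cdf_expMeasure_eq hr]

lemma ae_pos_expMeasure {r : ℝ} (hr : 0 < r) : ∀ᵐ u ∂expMeasure r, 0 < u := by
  have h0 : expMeasure r (Iic 0) = 0 := by simp [expMeasure_Iic hr]
  exact ae_iff.2 (by simp only [not_lt]; exact h0)

lemma expMeasure_Ici {r x : ℝ} (hr : 0 < r) (hx : 0 ≤ x) :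
    expMeasure r (Ici x) = ENNReal.ofReal (exp (-(r * x))) := by
  have := isProbabilityMeasure_expMeasure hr
  have hIio : Iio x =ᵐ[expMeasure r] Iic x :=
    (withDensity_absolutelyContinuous _ _).ae_le Iio_ae_eq_Iic
  rw [← compl_Iio, prob_compl_eq_one_sub measurableSet_Iio, measure_congr hIio,
    expMeasure_Iic hr, if_pos hx, ← ENNReal.ofReal_one,
    ← ENNReal.ofReal_sub _ (sub_nonneg.2 (exp_le_one_iff.2 (by nlinarith))), sub_sub_cancel]

lemma lintegral_exp_neg_mul_expMeasure {a b : ℝ} (ha : 0 < a) (hb : 0 ≤ b) :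
    ∫⁻ u, ENNReal.ofReal (exp (-(b * u))) ∂expMeasure a = ENNReal.ofReal (a / (a + b)) := by
  have hab : 0 < a + b := by linarith
  have hdensity : ∀ u, exponentialPDF a u * ENNReal.ofReal (exp (-(b * u)))
      = ENNReal.ofReal (a / (a + b)) * exponentialPDF (a + b) u := by
    intro u
    rcases lt_or_ge u 0 with hu | hu
    · simp [exponentialPDF_of_neg hu]
    · rw [exponentialPDF_of_nonneg hu, exponentialPDF_of_nonneg hu,
        ← ENNReal.ofReal_mul (by positivity), ← ENNReal.ofReal_mul (by positivity)]
      congr 1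
      rw [mul_assoc, ← exp_add, show -(a * u) + -(b * u) = -((a + b) * u) by ring]
      field_simp
  have hpdf : Measurable (exponentialPDF a) :=
    ENNReal.measurable_ofReal.comp (measurable_exponentialPDFReal a)
  have hexp : Measurable fun u : ℝ => ENNReal.ofReal (exp (-(b * u))) := by fun_prop
  change ∫⁻ u, _ ∂volume.withDensity (exponentialPDF a) = _
  rw [lintegral_withDensity_eq_lintegral_mul _ hpdf hexp]
  simp only [Pi.mul_apply, hdensity]
  rw [lintegral_const_mul' _ _ ENNReal.ofReal_ne_top,
    lintegral_exponentialPDF_eq_one hab, mul_one]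

variable {Ω : Type*} [MeasurableSpace Ω]

/-- `X` has the law of `c ^ (1 / α)` times a standard `α`-Fréchet variable, as far as its CDF on
`(0, ∞)` sees: the mass on `(-∞, 0]` is left unconstrained. -/
def HasFrechetCDF (μ : Measure Ω) (X : Ω → ℝ) (α c : ℝ) : Prop :=
  ∀ x, 0 < x → μ {ω | X ω ≤ x} = ENNReal.ofReal (exp (-(c * x ^ (-α))))

variable {μ : Measure Ω}

namespace HasFrechetCDF

variable {X : Ω → ℝ} {α : ℝ}

lemma const_mul [IsProbabilityMeasure μ] {c t : ℝ} (hX : HasFrechetCDF μ X α c) (hα : 0 < α)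
    (ht : 0 ≤ t) : HasFrechetCDF μ (fun ω => t * X ω) α (t ^ α * c) := by
  intro x hx
  rcases ht.eq_or_lt with rfl | ht
  · simp [hx.le, zero_rpow hα.ne']
  · have hset : {ω | t * X ω ≤ x} = {ω | X ω ≤ x / t} := by
      ext ω
      simp only [mem_ofPred_eq, le_div_iff₀ ht, mul_comm]
    rw [hset, hX _ (div_pos hx ht), div_rpow hx.le ht.le, rpow_neg ht.le, div_inv_eq_mul]
    ring_nf

lemma map_eq [IsProbabilityMeasure μ] {a : ℝ} (hX : HasFrechetCDF μ X α a) (hα : 0 < α)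
    (ha : 0 < a) (hXm : Measurable X) (hpos : ∀ᵐ ω ∂μ, 0 < X ω) :
    μ.map X = (expMeasure a).map (fun u => u ^ (-α⁻¹)) := by
  have hT : Measurable fun u : ℝ => u ^ (-α⁻¹) := measurable_id.pow_const _
  have := isProbabilityMeasure_expMeasure ha
  have := Measure.isProbabilityMeasure_map (μ := μ) hXm.aemeasurable
  refine Measure.ext_of_Iic _ _ fun x => ?_
  rw [Measure.map_apply hXm measurableSet_Iic, Measure.map_apply hT measurableSet_Iic]
  rcases le_or_gt x 0 with hx | hx
  · have hXnull : μ (X ⁻¹' Iic x) = 0 := by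
      refine measure_mono_null (fun ω hω => ?_) (ae_iff.1 hpos)
      exact not_lt.2 (le_trans hω hx)
    have hTnull : expMeasure a ((· ^ (-α⁻¹)) ⁻¹' Iic x) = 0 := by
      refine measure_mono_null (fun u hu => ?_) (ae_iff.1 (ae_pos_expMeasure ha))
      exact fun hu0 => (rpow_pos_of_pos hu0 _).not_ge (le_trans hu hx)
    rw [hXnull, hTnull]
  · have hTset : (· ^ (-α⁻¹)) ⁻¹' Iic x =ᵐ[expMeasure a] Ici (x ^ (-α)) := by
      filter_upwards [ae_pos_expMeasure ha] with u hu
      rw [← inv_neg]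
      exact propext (rpow_inv_le_iff_of_neg hu hx (neg_lt_zero.2 hα))
    rw [measure_congr hTset, expMeasure_Ici ha (rpow_pos_of_pos hx _).le]
    exact hX x hx

lemma measure_le_of_indepFun [IsProbabilityMeasure μ] {Y : Ω → ℝ} {a b : ℝ}
    (hX : HasFrechetCDF μ X α a) (hY : HasFrechetCDF μ Y α b) (hα : 0 < α) (ha : 0 < a)
    (hb : 0 ≤ b) (hXm : Measurable X) (hYm : Measurable Y) (hXpos : ∀ᵐ ω ∂μ, 0 < X ω)
    (hXY : IndepFun X Y μ) :
    μ {ω | Y ω ≤ X ω} = ENNReal.ofReal (a / (a + b)) := by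
  have hs : MeasurableSet {p : ℝ × ℝ | p.2 ≤ p.1} := measurableSet_le measurable_snd measurable_fst
  have hsection : ∀ᵐ x ∂μ.map X, μ.map Y (Prod.mk x ⁻¹' {p | p.2 ≤ p.1})
      = ENNReal.ofReal (exp (-(b * x ^ (-α)))) := by
    filter_upwards [(ae_map_iff hXm.aemeasurable measurableSet_Ioi).2 hXpos] with x hx
    change μ.map Y (Iic x) = _
    rw [Measure.map_apply hYm measurableSet_Iic]
    exact hY x hx
  have hsubst : ∫⁻ x, ENNReal.ofReal (exp (-(b * x ^ (-α)))) ∂μ.map X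
      = ∫⁻ u, ENNReal.ofReal (exp (-(b * u))) ∂expMeasure a := by
    rw [hX.map_eq hα ha hXm hXpos, lintegral_map (by fun_prop) (by fun_prop)]
    refine lintegral_congr_ae ?_
    filter_upwards [ae_pos_expMeasure ha] with u hu
    rw [← rpow_mul hu.le, neg_mul_neg, inv_mul_cancel₀ hα.ne', rpow_one]
  calc μ {ω | Y ω ≤ X ω} = (μ.map X).prod (μ.map Y) {p | p.2 ≤ p.1} := by
        rw [← (indepFun_iff_map_prod_eq_prod_map_map hXm.aemeasurable hYm.aemeasurable).1 hXY,
          Measure.map_apply (hXm.prodMk hYm) hs]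
        rfl
    _ = ENNReal.ofReal (a / (a + b)) := by
        rw [Measure.prod_apply hs, lintegral_congr_ae hsection, hsubst,
          lintegral_exp_neg_mul_expMeasure ha hb]

end HasFrechetCDF

lemma iIndepFun.hasFrechetCDF_iSup {ι : Type*} {X : ι → Ω → ℝ} {α : ℝ} {c : ι → ℝ}
    (hind : iIndepFun X μ) (s : Finset ι) (hX : ∀ i ∈ s, HasFrechetCDF μ (X i) α (c i)) :
    HasFrechetCDF μ (fun ω => ⨆ i : s, X i ω) α (∑ i ∈ s, c i) := by
  intro x hx
  have hset : {ω | ⨆ i : s, X i ω ≤ x} = ⋂ i ∈ s, X i ⁻¹' Iic x := by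
    ext ω
    simp only [mem_ofPred_eq, mem_iInter, mem_preimage, mem_Iic]
    exact ⟨fun h i hi => (le_ciSup (Finite.bddAbove (finite_range _)) ⟨i, hi⟩).trans h,
      fun h => Real.iSup_le (fun i => h i i.2) hx.le⟩
  have hfactor : ∀ i ∈ s, μ (X i ⁻¹' Iic x) = ENNReal.ofReal (exp (-(c i * x ^ (-α)))) :=
    fun i hi => hX i hi x hx
  rw [hset, hind.measure_inter_preimage_eq_mul s (fun _ _ => measurableSet_Iic),
    Finset.prod_congr rfl hfactor,
    ← ENNReal.ofReal_prod_of_nonneg fun _ _ => (exp_pos _).le, ← exp_sum,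
    Finset.sum_mul, Finset.sum_neg_distrib]

lemma iIndepFun.indepFun_iSup_finset {ι : Type*} {X : ι → Ω → ℝ} (hind : iIndepFun X μ)
    (hXm : ∀ i, Measurable (X i)) {s : Finset ι} {i : ι} (hi : i ∉ s) :
    IndepFun (X i) (fun ω => ⨆ j : s, X j ω) μ :=
  (hind.indepFun_finset {i} s (Finset.disjoint_singleton_left.2 hi) hXm).comp
    (measurable_pi_apply (⟨i, Finset.mem_singleton_self i⟩ : ({i} : Finset ι)))
    (Measurable.iSup fun j => measurable_pi_apply j)

lemma measure_iSup_nonpos_eq_zero {ι : Type*} {X : ι → Ω → ℝ} {s : Finset ι} {j : ι}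
    (hj : j ∈ s) (hXj : ∀ᵐ ω ∂μ, 0 < X j ω) : μ {ω | ⨆ i : s, X i ω ≤ 0} = 0 := by
  refine measure_mono_null (fun ω hω => ?_) (ae_iff.1 hXj)
  exact not_lt.2 ((le_ciSup (f := fun i : s => X i ω) (finite_range _).bddAbove ⟨j, hj⟩).trans hω)

end ProbabilityTheory

theorem point_query_single_sketch_general
    {Ω : Type*} [MeasurableSpace Ω] (μ : Measure Ω) [IsProbabilityMeasure μ]
    (α : ℝ) (hα : 0 < α) (N : ℕ)
    (Z : Fin N → Ω → ℝ)
    (hmeas : ∀ i, Measurable (Z i))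
    (hindep : iIndepFun Z μ)
    (hcdf : ∀ i, ∀ x : ℝ, 0 < x →
      μ {ω | Z i ω ≤ x} = ENNReal.ofReal (Real.exp (-(x ^ (-α)))))
    (hcdf0 : ∀ i, ∀ x : ℝ, x ≤ 0 → μ {ω | Z i ω ≤ x} = 0)
    (f : Fin N → ℝ) (hf : ∀ i, 0 ≤ f i)
    (hfpos : 0 < ∑ i, f i ^ α)
    (i₀ : Fin N) :
    μ {ω | (⨆ i, f i * Z i ω) / Z i₀ ω = f i₀}
      = ENNReal.ofReal (f i₀ ^ α / ∑ i, f i ^ α) := by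
  classical
  set s := Finset.univ.erase i₀
  set Y : Ω → ℝ := fun ω => ⨆ i : s, f i * Z i ω
  have hZpos : ∀ᵐ ω ∂μ, ∀ i, 0 < Z i ω :=
    ae_all_iff.2 fun i => ae_iff.2 (by simpa only [not_lt] using hcdf0 i 0 le_rfl)
  have hfZpos : ∀ i, 0 < f i → ∀ᵐ ω ∂μ, 0 < f i * Z i ω := fun i hi => by
    filter_upwards [hZpos] with ω hω using mul_pos hi (hω i)
  have hevent : {ω | (⨆ i, f i * Z i ω) / Z i₀ ω = f i₀} =ᵐ[μ] {ω | Y ω ≤ f i₀ * Z i₀ ω} := by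
    filter_upwards [hZpos] with ω hω
    change ((⨆ i, f i * Z i ω) / Z i₀ ω = f i₀) = (Y ω ≤ f i₀ * Z i₀ ω)
    rw [eq_iff_iff, div_eq_iff (hω i₀).ne']
    exact Real.iSup_eq_apply_iff_iSup_erase_le (mul_nonneg (hf i₀) (hω i₀).le)
  have hfZm : ∀ i, Measurable fun ω => f i * Z i ω := fun i => (hmeas i).const_mul _
  have hfZindep : iIndepFun (fun i ω => f i * Z i ω) μ :=
    hindep.comp _ fun i => measurable_const_mul (f i)
  have hfZcdf : ∀ i, HasFrechetCDF μ (fun ω => f i * Z i ω) α (f i ^ α) := fun i => by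
    simpa using HasFrechetCDF.const_mul (c := 1) (fun x hx => by simpa using hcdf i x hx) hα (hf i)
  have hsum : f i₀ ^ α + ∑ i ∈ s, f i ^ α = ∑ i, f i ^ α :=
    Finset.add_sum_erase _ (fun i => f i ^ α) (Finset.mem_univ i₀)
  rw [measure_congr hevent]
  rcases (hf i₀).eq_or_lt with hzero | hpos
  · rw [← hzero, zero_rpow hα.ne', zero_add] at hsum
    obtain ⟨j, hjs, hj⟩ := Finset.exists_ne_zero_of_sum_ne_zero (hsum ▸ hfpos.ne')
    have hfj : 0 < f j := (hf j).lt_of_ne' fun h => hj (by rw [h, zero_rpow hα.ne'])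
    rw [← hzero, zero_rpow hα.ne', zero_div, ENNReal.ofReal_zero]
    simpa only [zero_mul] using
      measure_iSup_nonpos_eq_zero (X := fun i ω => f i * Z i ω) hjs (hfZpos j hfj)
  · rw [(hfZcdf i₀).measure_le_of_indepFun (hfZindep.hasFrechetCDF_iSup s fun i _ => hfZcdf i)
        hα (rpow_pos_of_pos hpos α) (Finset.sum_nonneg fun i _ => rpow_nonneg (hf i) α)
        (hfZm i₀) (Measurable.iSup fun i => hfZm i) (hfZpos i₀ hpos)
        (hfZindep.indepFun_iSup_finset hfZm (Finset.notMem_erase i₀ _)), hsum]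

theorem point_query_single_sketch
    {Ω : Type*} [MeasurableSpace Ω] (μ : Measure Ω) [IsProbabilityMeasure μ]
    (α : ℝ) (hα : 0 < α) (N : ℕ) [NeZero N]
    (Z : Fin N → Ω → ℝ)
    (hmeas : ∀ i, Measurable (Z i))
    (hindep : iIndepFun Z μ)
    (hcdf : ∀ i, ∀ x : ℝ, 0 < x →
      μ {ω | Z i ω ≤ x} = ENNReal.ofReal (Real.exp (-(x ^ (-α)))))
    (hcdf0 : ∀ i, ∀ x : ℝ, x ≤ 0 → μ {ω | Z i ω ≤ x} = 0)
    (f : Fin N → ℝ) (hf : ∀ i, 0 ≤ f i)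
    (hfpos : 0 < ∑ i, f i ^ α)
    (i₀ : Fin N) :
    μ {ω | (⨆ i, f i * Z i ω) / Z i₀ ω = f i₀}
      = ENNReal.ofReal (f i₀ ^ α / ∑ i, f i ^ α) :=
  point_query_single_sketch_general μ α hα N Z hmeas hindep hcdf hcdf0 f hf hfpos i₀
end

section
/- Let Z' and Z'' be independent standard α-Fréchet random variables, c > 0, η ∈ (0,1/2), and define ξ* := c·((1+η)/(1-η))·Z'/Z'' and ξ_* := c·((1-η)/(1+η))·Z'/Z''. Then sup_{x>0} |F_{ξ_*}(x) - F_{ξ*}(x)| ≤ α·2^{4α+3}·η, where F denotes the cumulative distribution function. -/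
open MeasureTheory ProbabilityTheory Real
open scoped symmDiff

/-! On the full-measure event `Z'' > 0` the two events read `Z' ≤ k t Z''` and `Z' ≤ t Z''`
with `k = ((1 + η) / (1 - η))²`, so they differ by a strip `t Z'' < Z' ≤ k t Z''`. By
independence, its probability is an average over `y = Z''` of `F (k t y) - F (t y)`, where
`F u = exp (-u^(-α))` is the Fréchet distribution function. Since
`exp (-a) - exp (-b) ≤ (b - a) / a`, each such increment is at most
`k^α - 1 ≤ α log k · k^α ≤ α · 8η · 2^(4α)`. -/

namespace Real

lemma exp_neg_sub_exp_neg_le_div {a b : ℝ} (ha : 0 < a) (hab : a ≤ b) :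
    exp (-a) - exp (-b) ≤ (b - a) / a := by
  have hgap : 1 - exp (-(b - a)) ≤ b - a := by linarith [one_sub_le_exp_neg (b - a)]
  have hdecay : a * exp (-a) ≤ 1 :=
    (mul_exp_neg_le_exp_neg_one a).trans (exp_le_one_iff.mpr (by norm_num))
  have hgap0 : 0 ≤ 1 - exp (-(b - a)) :=
    sub_nonneg.mpr (exp_le_one_iff.mpr (by linarith))
  rw [le_div_iff₀ ha]
  calc (exp (-a) - exp (-b)) * a = a * exp (-a) * (1 - exp (-(b - a))) := by
        rw [show -b = -a + -(b - a) by ring, exp_add]; ring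
    _ ≤ b - a := by nlinarith

lemma rpow_sub_one_le_mul_log_mul_rpow {k : ℝ} (hk : 0 < k) (α : ℝ) :
    k ^ α - 1 ≤ α * log k * k ^ α := by
  rw [rpow_def_of_pos hk, mul_comm α]
  have := one_sub_le_exp_neg (log k * α)
  have hmul : exp (log k * α) * exp (-(log k * α)) = 1 := by rw [← exp_add]; simp
  nlinarith [exp_pos (log k * α)]

end Real

lemma frechet_cdf_sub_le {α u v : ℝ} (hα : 0 ≤ α) (hu : 0 < u) (huv : u ≤ v) :
    exp (-v ^ (-α)) - exp (-u ^ (-α)) ≤ (v / u) ^ α - 1 := by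
  have hv : 0 < v := hu.trans_le huv
  have hratio : u ^ (-α) / v ^ (-α) = (v / u) ^ α := by
    rw [← div_rpow hu.le hv.le, rpow_neg (div_nonneg hu.le hv.le),
      ← inv_rpow (div_nonneg hu.le hv.le), inv_div]
  calc exp (-v ^ (-α)) - exp (-u ^ (-α)) ≤ (u ^ (-α) - v ^ (-α)) / v ^ (-α) :=
        exp_neg_sub_exp_neg_le_div (rpow_pos_of_pos hv _)
          (rpow_le_rpow_of_nonpos hu huv (neg_nonpos.mpr hα))
    _ = (v / u) ^ α - 1 := by rw [sub_div, div_self (rpow_pos_of_pos hv _).ne', hratio]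

lemma one_add_div_one_sub_sq_rpow_sub_one_le {α η : ℝ} (hα : 0 ≤ α) (hη0 : 0 ≤ η)
    (hη : η ≤ 1 / 2) : (((1 + η) / (1 - η)) ^ 2) ^ α - 1 ≤ α * 2 ^ (4 * α + 3) * η := by
  have h1η : 0 < 1 - η := by linarith
  have hr1 : 1 ≤ (1 + η) / (1 - η) := by rw [le_div_iff₀ h1η]; linarith
  have hr3 : (1 + η) / (1 - η) ≤ 3 := by rw [div_le_iff₀ h1η]; linarith
  set k := ((1 + η) / (1 - η)) ^ 2
  have hk0 : 0 < k := by positivity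
  have hlog : log k ≤ 8 * η := by
    have hsub : (1 + η) / (1 - η) - 1 ≤ 4 * η := by
      rw [div_sub_one h1η.ne', div_le_iff₀ h1η]; nlinarith
    have := log_le_sub_one_of_pos (show 0 < (1 + η) / (1 - η) by positivity)
    simp only [k, log_pow]; push_cast; linarith
  have hpow : k ^ α ≤ 2 ^ (4 * α) := by
    rw [rpow_mul (by norm_num : (0:ℝ) ≤ 2)]
    exact rpow_le_rpow hk0.le (by simp only [k]; norm_num; nlinarith) hα
  calc k ^ α - 1 ≤ α * log k * k ^ α := rpow_sub_one_le_mul_log_mul_rpow hk0 α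
    _ ≤ α * (8 * η) * 2 ^ (4 * α) := by gcongr
    _ = α * 2 ^ (4 * α + 3) * η := by
        rw [rpow_add two_pos, show (2:ℝ) ^ (3:ℝ) = 8 by norm_num]; ring

lemma ProbabilityTheory.IndepFun.measure_preimage_le_of_forall_slice_le
    {Ω α β : Type*} [MeasurableSpace Ω] [MeasurableSpace α] [MeasurableSpace β]
    {μ : Measure Ω} [IsProbabilityMeasure μ] {X : Ω → α} {Y : Ω → β}
    (hX : Measurable X) (hY : Measurable Y) (hXY : IndepFun X Y μ)
    {D : Set (α × β)} (hD : MeasurableSet D) {M : ENNReal}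
    (hslice : ∀ y, μ.map X ((fun x => (x, y)) ⁻¹' D) ≤ M) :
    μ ((fun ω => (X ω, Y ω)) ⁻¹' D) ≤ M := by
  have : IsProbabilityMeasure (μ.map Y) := Measure.isProbabilityMeasure_map hY.aemeasurable
  calc μ ((fun ω => (X ω, Y ω)) ⁻¹' D) = (μ.map X).prod (μ.map Y) D := by
        rw [← (indepFun_iff_map_prod_eq_prod_map_map hX.aemeasurable hY.aemeasurable).mp hXY,
          Measure.map_apply (hX.prodMk hY) hD]
    _ = ∫⁻ y, μ.map X ((fun x => (x, y)) ⁻¹' D) ∂(μ.map Y) := Measure.prod_apply_symm hD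
    _ ≤ ∫⁻ _, M ∂(μ.map Y) := lintegral_mono hslice
    _ = M := by simp

lemma symmDiff_setOf_mul_div_le_subset {Ω : Type*} {f g : Ω → ℝ} {a b x : ℝ} (ha : 0 < a)
    (hab : a ≤ b) (hx : 0 ≤ x) :
    {ω | a * f ω / g ω ≤ x} ∆ {ω | b * f ω / g ω ≤ x} ⊆
      {ω | x / b * g ω < f ω ∧ f ω ≤ x / a * g ω} ∪ {ω | g ω ≤ 0} := by
  have hb : 0 < b := ha.trans_le hab
  have hiff : ∀ {c : ℝ}, 0 < c → ∀ ω, 0 < g ω → (c * f ω / g ω ≤ x ↔ f ω ≤ x / c * g ω) := by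
    intro c hc ω hg
    rw [div_le_iff₀ hg, div_mul_eq_mul_div, le_div_iff₀ hc, mul_comm (f ω)]
  have hxg : ∀ ω, 0 < g ω → x / b * g ω ≤ x / a * g ω := fun ω hg =>
    mul_le_mul_of_nonneg_right (div_le_div_of_nonneg_left hx ha hab) hg.le
  intro ω hω
  rcases le_or_gt (g ω) 0 with hg | hg
  · exact Or.inr hg
  simp only [Set.mem_symmDiff, Set.mem_ofPred_eq, hiff ha ω hg, hiff hb ω hg, not_le] at hω
  rcases hω with ⟨hA, hB⟩ | ⟨hB, hA⟩
  · exact Or.inl ⟨hB, hA⟩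
  · exact absurd (hB.trans (hxg ω hg)) hA.not_ge

section FrechetMarginal

variable {Ω : Type*} [MeasurableSpace Ω] {μ : Measure Ω} [IsProbabilityMeasure μ] {α : ℝ}
  {f : Ω → ℝ}

lemma map_Ioc_le_of_frechet_cdf (hα : 0 ≤ α) (hf : Measurable f)
    (hcdf : ∀ x : ℝ, 0 < x → μ {ω | f ω ≤ x} = ENNReal.ofReal (exp (-x ^ (-α))))
    {u v : ℝ} (hu : 0 < u) (huv : u ≤ v) :
    μ.map f (Set.Ioc u v) ≤ ENNReal.ofReal ((v / u) ^ α - 1) := by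
  have hsub : {ω | f ω ≤ u} ⊆ {ω | f ω ≤ v} := fun ω h => h.trans huv
  have hIoc : f ⁻¹' Set.Ioc u v = {ω | f ω ≤ v} \ {ω | f ω ≤ u} := by
    ext ω
    simp only [Set.mem_preimage, Set.mem_Ioc, Set.mem_sdiff, Set.mem_ofPred_eq, not_le, and_comm]
  rw [Measure.map_apply hf measurableSet_Ioc, hIoc,
    measure_sdiff hsub (measurableSet_le hf measurable_const).nullMeasurableSet
      (measure_ne_top μ _),
    hcdf v (hu.trans_le huv), hcdf u hu, ← ENNReal.ofReal_sub _ (exp_pos _).le]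
  exact ENNReal.ofReal_le_ofReal (frechet_cdf_sub_le hα hu huv)

lemma measureReal_strip_le_of_frechet_cdf (hα : 0 ≤ α) {g : Ω → ℝ} (hf : Measurable f)
    (hg : Measurable g) (hfg : IndepFun f g μ)
    (hcdf : ∀ x : ℝ, 0 < x → μ {ω | f ω ≤ x} = ENNReal.ofReal (exp (-x ^ (-α))))
    {s t : ℝ} (hs : 0 < s) (hst : s ≤ t) :
    μ.real {ω | s * g ω < f ω ∧ f ω ≤ t * g ω} ≤ (t / s) ^ α - 1 := by
  set D : Set (ℝ × ℝ) := {p | s * p.2 < p.1 ∧ p.1 ≤ t * p.2}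
  have hD : MeasurableSet D :=
    (measurableSet_lt (measurable_const.mul measurable_snd) measurable_fst).inter
      (measurableSet_le measurable_fst (measurable_const.mul measurable_snd))
  have hslice : ∀ y, μ.map f ((fun x => (x, y)) ⁻¹' D) ≤ ENNReal.ofReal ((t / s) ^ α - 1) := by
    intro y
    rcases le_or_gt y 0 with hy | hy
    · have hempty : (fun x => (x, y)) ⁻¹' D = ∅ :=
        Set.eq_empty_of_forall_notMem fun x ⟨hlt, hle⟩ => by nlinarith
      simp [hempty]
    have hIoc : (fun x => (x, y)) ⁻¹' D = Set.Ioc (s * y) (t * y) := by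
      ext x
      simp only [D, Set.mem_preimage, Set.mem_ofPred_eq, Set.mem_Ioc, mul_comm _ y]
    rw [hIoc, ← mul_div_mul_right t s hy.ne']
    exact map_Ioc_le_of_frechet_cdf hα hf hcdf (mul_pos hs hy)
      (mul_le_mul_of_nonneg_right hst hy.le)
  have hM : 0 ≤ (t / s) ^ α - 1 :=
    sub_nonneg.mpr (one_le_rpow ((one_le_div hs).mpr hst) hα)
  rw [measureReal_def, ← ENNReal.toReal_ofReal hM]
  exact ENNReal.toReal_mono ENNReal.ofReal_ne_top
    (hfg.measure_preimage_le_of_forall_slice_le hf hg hD hslice)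

end FrechetMarginal

theorem frechet_ratio_cdf_perturbation_general
    {Ω : Type*} [MeasurableSpace Ω] (μ : Measure Ω) [IsProbabilityMeasure μ]
    (α : ℝ) (hα : 0 < α) (Z' Z'' : Ω → ℝ)
    (hm' : Measurable Z') (hm'' : Measurable Z'')
    (hindep : IndepFun Z' Z'' μ)
    (hcdf' : ∀ x : ℝ, 0 < x →
      μ {ω | Z' ω ≤ x} = ENNReal.ofReal (Real.exp (-(x ^ (-α)))))
    (hcdf''0 : ∀ x : ℝ, x ≤ 0 → μ {ω | Z'' ω ≤ x} = 0)
    (c η : ℝ) (hc : 0 < c) (hη : η ∈ Set.Ioo (0 : ℝ) (1 / 2)) :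
    ∀ x : ℝ, 0 < x →
      |(μ {ω | c * ((1 - η) / (1 + η)) * Z' ω / Z'' ω ≤ x}).toReal
          - (μ {ω | c * ((1 + η) / (1 - η)) * Z' ω / Z'' ω ≤ x}).toReal|
        ≤ α * 2 ^ (4 * α + 3) * η := by
  intro x hx
  obtain ⟨hη0, hη1⟩ := hη
  have h1η : 0 < 1 - η := by linarith
  set a := c * ((1 - η) / (1 + η))
  set b := c * ((1 + η) / (1 - η))
  have ha : 0 < a := by positivity
  have hab : a ≤ b := by
    refine mul_le_mul_of_nonneg_left ?_ hc.le
    rw [div_le_div_iff₀ (by linarith) h1η]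
    nlinarith
  have hratio : x / a / (x / b) = ((1 + η) / (1 - η)) ^ 2 := by
    simp only [a, b]
    field_simp
  have hevent : ∀ r : ℝ, MeasurableSet {ω | r * Z' ω / Z'' ω ≤ x} := fun _ =>
    measurableSet_le ((measurable_const.mul hm').div hm'') measurable_const
  have hnull : μ.real {ω | Z'' ω ≤ 0} = 0 := by simp [measureReal_def, hcdf''0 0 le_rfl]
  calc |μ.real {ω | a * Z' ω / Z'' ω ≤ x} - μ.real {ω | b * Z' ω / Z'' ω ≤ x}|
      ≤ μ.real ({ω | x / b * Z'' ω < Z' ω ∧ Z' ω ≤ x / a * Z'' ω} ∪ {ω | Z'' ω ≤ 0}) :=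
        (abs_measureReal_sub_le_measureReal_symmDiff (hevent a).nullMeasurableSet
          (hevent b).nullMeasurableSet).trans
          (measureReal_mono (symmDiff_setOf_mul_div_le_subset ha hab hx.le))
    _ ≤ (x / a / (x / b)) ^ α - 1 + 0 :=
        (measureReal_union_le _ _).trans (add_le_add
          (measureReal_strip_le_of_frechet_cdf hα.le hm' hm'' hindep hcdf' (by positivity)
            (div_le_div_of_nonneg_left hx.le ha hab)) hnull.le)
    _ ≤ α * 2 ^ (4 * α + 3) * η := by
        rw [hratio, add_zero]
        exact one_add_div_one_sub_sq_rpow_sub_one_le hα.le hη0.le hη1.le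

theorem frechet_ratio_cdf_perturbation
    {Ω : Type*} [MeasurableSpace Ω] (μ : Measure Ω) [IsProbabilityMeasure μ]
    (α : ℝ) (hα : 0 < α) (Z' Z'' : Ω → ℝ)
    (hm' : Measurable Z') (hm'' : Measurable Z'')
    (hindep : IndepFun Z' Z'' μ)
    (hcdf' : ∀ x : ℝ, 0 < x →
      μ {ω | Z' ω ≤ x} = ENNReal.ofReal (Real.exp (-(x ^ (-α)))))
    (hcdf'0 : ∀ x : ℝ, x ≤ 0 → μ {ω | Z' ω ≤ x} = 0)
    (hcdf'' : ∀ x : ℝ, 0 < x →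
      μ {ω | Z'' ω ≤ x} = ENNReal.ofReal (Real.exp (-(x ^ (-α)))))
    (hcdf''0 : ∀ x : ℝ, x ≤ 0 → μ {ω | Z'' ω ≤ x} = 0)
    (c η : ℝ) (hc : 0 < c) (hη : η ∈ Set.Ioo (0 : ℝ) (1 / 2)) :
    ∀ x : ℝ, 0 < x →
      |(μ {ω | c * ((1 - η) / (1 + η)) * Z' ω / Z'' ω ≤ x}).toReal
          - (μ {ω | c * ((1 + η) / (1 - η)) * Z' ω / Z'' ω ≤ x}).toReal|
        ≤ α * 2 ^ (4 * α + 3) * η :=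
  frechet_ratio_cdf_perturbation_general μ α hα Z' Z'' hm' hm'' hindep hcdf' hcdf''0 c η hc hη
end
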